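/- arXiv:2310.14189 — 2 statements merged into one kernel-verified Lean document; each statement's English description precedes it below -/
import Mathlib

section
/- Fix real numbers ξ, θ, θ⁻ with θ⁻ < θ, and 0 < σ_min < σ_max. With σᵢ = σ_min + ((i−1)/(N−1))·(σ_max − σ_min), Δσ = (σ_max − σ_min)/(N−1), Dᵢᴺ(θ, θ⁻) = (σ_min/σᵢ₊₁)ξ + (1 − σ_min/σᵢ₊₁)θ − (σ_min/σᵢ)ξ − (1 − σ_min/σᵢ)θ⁻, and Gᴺ(θ, θ⁻) = (2/(N−1))·Σ_{i=1}^{N−1} Dᵢᴺ(θ, θ⁻)·(1 − σ_min/σᵢ₊₁), the scaled gradient (1/Δσ)·Gᴺ(θ, θ⁻) tends to +∞ as N → ∞. -/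
open Filter Finset

/-- The `i`-th noise level of the uniform discretization with `N` steps. -/
noncomputable def sigmaLvl (σmin σmax : ℝ) (N i : ℕ) : ℝ :=
  σmin + (((i : ℝ) - 1) / ((N : ℝ) - 1)) * (σmax - σmin)

/-- The difference `Dᵢᴺ(θ, θ⁻)` of student and teacher outputs in the toy model. -/
noncomputable def Dtoy (ξ θ θm σmin σmax : ℝ) (N i : ℕ) : ℝ :=
  (σmin / sigmaLvl σmin σmax N (i + 1)) * ξ + (1 - σmin / sigmaLvl σmin σmax N (i + 1)) * θ
    - (σmin / sigmaLvl σmin σmax N i) * ξ - (1 - σmin / sigmaLvl σmin σmax N i) * θm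

/-- The gradient `Gᴺ(θ, θ⁻)` of the toy consistency loss in `θ`. -/
noncomputable def Gtoy (ξ θ θm σmin σmax : ℝ) (N : ℕ) : ℝ :=
  (2 / ((N : ℝ) - 1)) * ∑ i ∈ Finset.Icc 1 (N - 1),
    Dtoy ξ θ θm σmin σmax N i * (1 - σmin / sigmaLvl σmin σmax N (i + 1))

/-
Writing `w i = 1 - σmin / σᵢ` for the weight of `θ` in `f_θ(x, σᵢ)`, each summand is
`Dᵢ wᵢ₊₁ = (θ - θ⁻) wᵢ₊₁² + (θ⁻ - ξ)(wᵢ₊₁ - wᵢ) wᵢ₊₁`. The weights lie in `[0, 1]` and increase,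
so the second parts add up to at most `|θ⁻ - ξ|` by telescoping. With `Δ = σmax - σmin`,
`wᵢ₊₁ = (σᵢ₊₁ - σmin)/σᵢ₊₁ ≥ (Δ/σmax) · i/(N-1)`, so `∑ wᵢ₊₁² ≥ (Δ/σmax)² (N-1)/3` grows
linearly in `N`. Since `(1/Δσ) Gᴺ = (2/Δ) ∑ Dᵢ wᵢ₊₁`, the scaled gradient tends to `+∞`.
-/

/-- The coefficient of `θ` in the toy consistency model `f_θ(x, σᵢ)`. -/
noncomputable def outWeight (σmin σmax : ℝ) (N i : ℕ) : ℝ :=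
  1 - σmin / sigmaLvl σmin σmax N i

lemma Finset.mul_sum_sq_sub_abs_mul_sum_le {ι : Type*} (s : Finset ι) (b e : ι → ℝ)
    (d c : ℝ) (hb₀ : ∀ i ∈ s, 0 ≤ b i) (hb₁ : ∀ i ∈ s, b i ≤ 1) (he : ∀ i ∈ s, 0 ≤ e i) :
    d * ∑ i ∈ s, b i ^ 2 - |c| * ∑ i ∈ s, e i ≤ ∑ i ∈ s, (b i * d + e i * c) * b i := by
  rw [mul_sum, mul_sum, ← sum_sub_distrib]
  refine sum_le_sum fun i hi => ?_
  have hcross : |c| * (e i * b i) ≤ |c| * e i :=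
    mul_le_mul_of_nonneg_left (mul_le_of_le_one_right (he i hi) (hb₁ i hi)) (abs_nonneg c)
  have habs : -|c| * (e i * b i) ≤ c * (e i * b i) :=
    mul_le_mul_of_nonneg_right (neg_abs_le c) (mul_nonneg (he i hi) (hb₀ i hi))
  linarith

lemma cube_div_three_le_sum_Icc_sq (n : ℕ) : (n : ℝ) ^ 3 / 3 ≤ ∑ i ∈ Icc 1 n, (i : ℝ) ^ 2 := by
  induction n with
  | zero => simp
  | succ n ih =>
    rw [sum_Icc_succ_top (by omega)]
    push_cast
    nlinarith [(n.cast_nonneg : (0 : ℝ) ≤ n)]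

section

variable {σmin σmax : ℝ}

lemma sigmaLvl_one (N : ℕ) : sigmaLvl σmin σmax N 1 = σmin := by
  simp [sigmaLvl]

lemma sigmaLvl_succ_succ (n i : ℕ) :
    sigmaLvl σmin σmax (n + 1) (i + 1) = σmin + i / n * (σmax - σmin) := by
  simp [sigmaLvl]

lemma monotone_sigmaLvl (h : σmin ≤ σmax) (n : ℕ) : Monotone (sigmaLvl σmin σmax (n + 1)) := by
  intro i j hij
  have hΔ : 0 ≤ σmax - σmin := sub_nonneg.2 h
  simp only [sigmaLvl, Nat.cast_add, Nat.cast_one, add_sub_cancel_right]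
  gcongr

lemma sigmaLvl_succ_le (h : σmin ≤ σmax) {n i : ℕ} (hi : i ≤ n) :
    sigmaLvl σmin σmax (n + 1) (i + 1) ≤ σmax := by
  have hΔ : 0 ≤ σmax - σmin := sub_nonneg.2 h
  have hin : (i : ℝ) / n ≤ 1 := div_le_one_of_le₀ (by exact_mod_cast hi) n.cast_nonneg
  rw [sigmaLvl_succ_succ]
  nlinarith

lemma le_sigmaLvl (h : σmin ≤ σmax) {n i : ℕ} (hi : 1 ≤ i) :
    σmin ≤ sigmaLvl σmin σmax (n + 1) i := by
  simpa only [sigmaLvl_one] using monotone_sigmaLvl h n hi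

lemma outWeight_one (h0 : σmin ≠ 0) (N : ℕ) : outWeight σmin σmax N 1 = 0 := by
  simp [outWeight, sigmaLvl_one, h0]

variable (h0 : 0 < σmin) (h : σmin ≤ σmax) {n i : ℕ}
include h0 h

lemma outWeight_nonneg (hi : 1 ≤ i) : 0 ≤ outWeight σmin σmax (n + 1) i := by
  have hσ := le_sigmaLvl h (n := n) hi
  rw [outWeight, sub_nonneg]
  exact div_le_one_of_le₀ hσ (h0.le.trans hσ)

lemma outWeight_le_one (hi : 1 ≤ i) : outWeight σmin σmax (n + 1) i ≤ 1 := by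
  have hσ := h0.trans_le (le_sigmaLvl h (n := n) hi)
  rw [outWeight, sub_le_self_iff]
  positivity

lemma monotoneOn_outWeight : MonotoneOn (outWeight σmin σmax (n + 1)) (Set.Ici 1) := by
  intro i hi j _ hij
  have hσ := h0.trans_le (le_sigmaLvl h (n := n) hi)
  unfold outWeight
  gcongr
  exact monotone_sigmaLvl h n hij

lemma le_outWeight_succ (hi : i ≤ n) :
    (σmax - σmin) / σmax * (i / n) ≤ outWeight σmin σmax (n + 1) (i + 1) := by
  have hgap : sigmaLvl σmin σmax (n + 1) (i + 1) - σmin = i / n * (σmax - σmin) := by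
    rw [sigmaLvl_succ_succ]; ring
  set σ := sigmaLvl σmin σmax (n + 1) (i + 1)
  have hσmin : σmin ≤ σ := le_sigmaLvl h (by omega)
  have hσmax : σ ≤ σmax := sigmaLvl_succ_le h hi
  have hσ : 0 < σ := h0.trans_le hσmin
  calc (σmax - σmin) / σmax * (i / n) = (σ - σmin) / σmax := by rw [hgap]; ring
    _ ≤ (σ - σmin) / σ := div_le_div_of_nonneg_left (sub_nonneg.2 hσmin) hσ hσmax
    _ = outWeight σmin σmax (n + 1) (i + 1) := by
      rw [outWeight, sub_div, div_self hσ.ne']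

lemma le_sum_outWeight_sq (n : ℕ) :
    ((σmax - σmin) / σmax) ^ 2 * (n / 3)
      ≤ ∑ i ∈ Icc 1 n, outWeight σmin σmax (n + 1) (i + 1) ^ 2 := by
  set c := (σmax - σmin) / σmax
  have hc : 0 ≤ c := div_nonneg (sub_nonneg.2 h) (h0.trans_le h).le
  calc c ^ 2 * (n / 3) = c ^ 2 / n ^ 2 * (n ^ 3 / 3) := by
        rcases n.eq_zero_or_pos with rfl | hn
        · simp
        · field_simp
    _ ≤ c ^ 2 / n ^ 2 * ∑ i ∈ Icc 1 n, (i : ℝ) ^ 2 := by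
        gcongr; exact cube_div_three_le_sum_Icc_sq n
    _ = ∑ i ∈ Icc 1 n, (c * (i / n)) ^ 2 := by rw [mul_sum]; congr! 1; ring
    _ ≤ _ := by
      refine sum_le_sum fun i hi => ?_
      have hi := (mem_Icc.1 hi).2
      gcongr
      exact le_outWeight_succ h0 h hi

end

lemma Dtoy_eq (ξ θ θm σmin σmax : ℝ) (N i : ℕ) :
    Dtoy ξ θ θm σmin σmax N i = outWeight σmin σmax N (i + 1) * (θ - θm)
      + (outWeight σmin σmax N (i + 1) - outWeight σmin σmax N i) * (θm - ξ) := by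
  simp only [Dtoy, outWeight]
  ring

lemma le_sum_Dtoy_mul_outWeight (ξ θ θm σmin σmax : ℝ) (hlt : θm ≤ θ) (h0 : 0 < σmin)
    (h : σmin ≤ σmax) (n : ℕ) :
    (θ - θm) * (((σmax - σmin) / σmax) ^ 2 * (n / 3)) - |θm - ξ|
      ≤ ∑ i ∈ Icc 1 n, Dtoy ξ θ θm σmin σmax (n + 1) i * outWeight σmin σmax (n + 1) (i + 1) := by
  set w := outWeight σmin σmax (n + 1)
  have hw₀ : ∀ i ∈ Icc 1 n, 0 ≤ w (i + 1) := fun i _ => outWeight_nonneg h0 h (by omega)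
  have hw₁ : ∀ i ∈ Icc 1 n, w (i + 1) ≤ 1 := fun i _ => outWeight_le_one h0 h (by omega)
  have hstep : ∀ i ∈ Icc 1 n, 0 ≤ w (i + 1) - w i := fun i hi =>
    sub_nonneg.2 <| monotoneOn_outWeight h0 h (mem_Icc.1 hi).1 (by simp) (by omega)
  have htel : ∑ i ∈ Icc 1 n, (w (i + 1) - w i) ≤ 1 := by
    rw [← Ico_add_one_right_eq_Icc, sum_Ico_sub w (by omega),
      show w 1 = 0 from outWeight_one h0.ne' _, sub_zero]
    exact outWeight_le_one h0 h (by omega)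
  have hsq := mul_le_mul_of_nonneg_left (le_sum_outWeight_sq h0 h n) (sub_nonneg.2 hlt)
  have habs := mul_le_mul_of_nonneg_left htel (abs_nonneg (θm - ξ))
  simp only [Dtoy_eq]
  linarith [(Icc 1 n).mul_sum_sq_sub_abs_mul_sum_le _ _ (θ - θm) (θm - ξ) hw₀ hw₁ hstep]

lemma scaled_Gtoy_succ (ξ θ θm σmin σmax : ℝ) (h : σmin ≠ σmax) {n : ℕ} (hn : n ≠ 0) :
    1 / ((σmax - σmin) / ((n + 1 : ℕ) - 1 : ℝ)) * Gtoy ξ θ θm σmin σmax (n + 1)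
      = 2 / (σmax - σmin) * ∑ i ∈ Icc 1 n,
          Dtoy ξ θ θm σmin σmax (n + 1) i * outWeight σmin σmax (n + 1) (i + 1) := by
  have hΔ : σmax - σmin ≠ 0 := sub_ne_zero.2 h.symm
  simp only [Gtoy, outWeight, Nat.cast_add, Nat.cast_one, add_sub_cancel_right,
    Nat.add_sub_cancel]
  field_simp

/-- Proposition 1, equation (7), case `θ⁻ < θ`: the gradient scaled by `1/Δσ`
tends to `+∞` as `N → ∞`. -/
theorem scaled_gradient_limit_teacher_lt_student (ξ θ θm σmin σmax : ℝ)
    (hlt : θm < θ) (h0 : 0 < σmin) (h1 : σmin < σmax) :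
    Tendsto (fun N : ℕ =>
        (1 / ((σmax - σmin) / ((N : ℝ) - 1))) * Gtoy ξ θ θm σmin σmax N) atTop atTop := by
  have hΔ : 0 < σmax - σmin := sub_pos.2 h1
  have hc : 0 < (θ - θm) * ((σmax - σmin) / σmax) ^ 2 / 3 := by
    have := sub_pos.2 hlt
    have := h0.trans h1
    positivity
  have hlower : Tendsto (fun n : ℕ => 2 / (σmax - σmin) *
      ((θ - θm) * (((σmax - σmin) / σmax) ^ 2 * (n / 3)) - |θm - ξ|)) atTop atTop := by
    refine Tendsto.const_mul_atTop (by positivity) (tendsto_atTop_add_const_right _ _ ?_)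
    convert tendsto_natCast_atTop_atTop.const_mul_atTop hc using 2
    ring
  rw [← tendsto_add_atTop_iff_nat 1]
  refine tendsto_atTop_mono' _ ?_ hlower
  filter_upwards [eventually_ne_atTop 0] with n hn
  rw [scaled_Gtoy_succ ξ θ θm σmin σmax h1.ne hn]
  gcongr
  exact le_sum_Dtoy_mul_outWeight ξ θ θm σmin σmax hlt.le h0 h1.le n
end

section
/- Fix real numbers ξ, θ and 0 < σ_min < σ_max. With σᵢ = σ_min + ((i−1)/(N−1))·(σ_max − σ_min), Dᵢᴺ(θ, θ⁻) = (σ_min/σᵢ₊₁)ξ + (1 − σ_min/σᵢ₊₁)θ − (σ_min/σᵢ)ξ − (1 − σ_min/σᵢ)θ⁻, and Gᴺ(θ, θ⁻) = (2/(N−1))·Σ_{i=1}^{N−1} Dᵢᴺ(θ, θ⁻)·(1 − σ_min/σᵢ₊₁), one has lim_{N→∞} Gᴺ(θ, θ) = 0; i.e. when the teacher equals the student the unscaled gradient of the consistency loss vanishes in the limit N → ∞. -/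
open Filter Finset

lemma sigma_ge {σmin σmax : ℝ} (h0 : 0 < σmin) (h1 : σmin ≤ σmax) {N i : ℕ}
    (hN : 2 ≤ N) (hi : 1 ≤ i) : σmin ≤ sigmaLvl σmin σmax N i := by
  unfold sigmaLvl
  have hN1 : (0:ℝ) < (N:ℝ) - 1 := by
    have : (2:ℝ) ≤ N := by exact_mod_cast hN
    linarith
  have hi1 : (1:ℝ) ≤ (i:ℝ) := by exact_mod_cast hi
  have := mul_nonneg (div_nonneg (by linarith : (0:ℝ) ≤ (i:ℝ) - 1) hN1.le)
    (by linarith : (0:ℝ) ≤ σmax - σmin)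
  linarith

lemma term_bound (ξ θ σmin σmax : ℝ) (h0 : 0 < σmin) (h1 : σmin < σmax) {N i : ℕ}
    (hN : 2 ≤ N) (hi : 1 ≤ i) :
    |Dtoy ξ θ θ σmin σmax N i * (1 - σmin / sigmaLvl σmin σmax N (i + 1))|
      ≤ (σmax - σmin) * |ξ - θ| / (σmin * ((N:ℝ) - 1)) := by
  have hN1 : (0:ℝ) < (N:ℝ) - 1 := by
    have : (2:ℝ) ≤ N := by exact_mod_cast hN
    linarith
  set a := sigmaLvl σmin σmax N i with ha_def
  set b := sigmaLvl σmin σmax N (i + 1) with hb_def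
  have ha : σmin ≤ a := sigma_ge h0 h1.le hN hi
  have hb : σmin ≤ b := sigma_ge h0 h1.le hN (le_trans hi (Nat.le_succ i))
  have ha0 : 0 < a := lt_of_lt_of_le h0 ha
  have hb0 : 0 < b := lt_of_lt_of_le h0 hb
  have hdiff : b - a = (σmax - σmin) / ((N:ℝ) - 1) := by
    rw [ha_def, hb_def]
    unfold sigmaLvl
    push_cast
    field_simp
    ring
  have hba : a ≤ b := by
    have : (0:ℝ) ≤ (σmax - σmin) / ((N:ℝ) - 1) := div_nonneg (by linarith) hN1.le
    linarith
  have hD : Dtoy ξ θ θ σmin σmax N i = (σmin / b - σmin / a) * (ξ - θ) := by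
    unfold Dtoy
    rw [← ha_def, ← hb_def]
    ring
  have hfrac : |σmin / b - σmin / a| = σmin * (b - a) / (a * b) := by
    rw [abs_of_nonpos (by
      apply sub_nonpos.mpr
      exact div_le_div_of_nonneg_left h0.le ha0 hba)]
    field_simp
    ring
  have hfrac_le : σmin * (b - a) / (a * b) ≤ (σmax - σmin) / (σmin * ((N:ℝ) - 1)) := by
    rw [div_le_div_iff₀ (by positivity) (by positivity), hdiff]
    have heq : σmin * ((σmax - σmin) / ((N:ℝ) - 1)) * (σmin * ((N:ℝ) - 1))
        = σmin * σmin * (σmax - σmin) := by field_simp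
    rw [heq]
    nlinarith [mul_le_mul ha hb h0.le ha0.le]
  have hlast : |1 - σmin / b| ≤ 1 := by
    rw [abs_le]
    constructor
    · have : σmin / b ≤ 1 := (div_le_one hb0).mpr hb
      linarith
    · have : 0 ≤ σmin / b := by positivity
      linarith
  calc |Dtoy ξ θ θ σmin σmax N i * (1 - σmin / b)|
      = |σmin / b - σmin / a| * |ξ - θ| * |1 - σmin / b| := by
        rw [hD, abs_mul, abs_mul]
    _ ≤ ((σmax - σmin) / (σmin * ((N:ℝ) - 1))) * |ξ - θ| * 1 := by
        apply mul_le_mul _ hlast (abs_nonneg _)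
          (mul_nonneg (div_nonneg (by linarith) (by positivity)) (abs_nonneg _))
        apply mul_le_mul_of_nonneg_right _ (abs_nonneg _)
        rw [hfrac]; exact hfrac_le
    _ = (σmax - σmin) * |ξ - θ| / (σmin * ((N:ℝ) - 1)) := by ring

/-- Equation (12) of the proof of Proposition 1, case `θ⁻ = θ`: when teacher equals
student, the unscaled gradient vanishes in the limit `N → ∞`. -/
theorem unscaled_gradient_limit_teacher_eq_student (ξ θ σmin σmax : ℝ)
    (h0 : 0 < σmin) (h1 : σmin < σmax) :
    Tendsto (fun N : ℕ => Gtoy ξ θ θ σmin σmax N) atTop (nhds 0) := by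
  have hg : Tendsto (fun N : ℕ => (2 * ((σmax - σmin) * |ξ - θ| / σmin)) / ((N:ℝ) - 1))
      atTop (nhds 0) := by
    have h1' : Tendsto (fun N : ℕ => (N:ℝ) - 1) atTop atTop :=
      tendsto_atTop_add_const_right atTop (-1) tendsto_natCast_atTop_atTop
    simpa [div_eq_mul_inv] using h1'.inv_tendsto_atTop.const_mul
      (2 * ((σmax - σmin) * |ξ - θ| / σmin))
  apply squeeze_zero_norm' _ hg
  filter_upwards [eventually_ge_atTop 2] with N hN
  have hN1 : (0:ℝ) < (N:ℝ) - 1 := by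
    have : (2:ℝ) ≤ N := by exact_mod_cast hN
    linarith
  have hcard : ((Finset.Icc 1 (N - 1)).card : ℝ) = (N:ℝ) - 1 := by
    rw [Nat.card_Icc]
    have : N - 1 + 1 - 1 = N - 1 := by omega
    rw [this, Nat.cast_sub (by omega)]
    simp
  have hsum : |∑ i ∈ Finset.Icc 1 (N - 1),
      Dtoy ξ θ θ σmin σmax N i * (1 - σmin / sigmaLvl σmin σmax N (i + 1))|
      ≤ ((N:ℝ) - 1) * ((σmax - σmin) * |ξ - θ| / (σmin * ((N:ℝ) - 1))) := by
    calc |∑ i ∈ Finset.Icc 1 (N - 1),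
        Dtoy ξ θ θ σmin σmax N i * (1 - σmin / sigmaLvl σmin σmax N (i + 1))|
        ≤ ∑ i ∈ Finset.Icc 1 (N - 1),
          |Dtoy ξ θ θ σmin σmax N i * (1 - σmin / sigmaLvl σmin σmax N (i + 1))| :=
          Finset.abs_sum_le_sum_abs _ _
      _ ≤ ∑ __ ∈ Finset.Icc 1 (N - 1),
          (σmax - σmin) * |ξ - θ| / (σmin * ((N:ℝ) - 1)) := by
          apply Finset.sum_le_sum
          intro i hi
          exact term_bound ξ θ σmin σmax h0 h1 hN (Finset.mem_Icc.mp hi).1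
      _ = ((N:ℝ) - 1) * ((σmax - σmin) * |ξ - θ| / (σmin * ((N:ℝ) - 1))) := by
          rw [Finset.sum_const, nsmul_eq_mul, hcard]
  have : ‖Gtoy ξ θ θ σmin σmax N‖ ≤ (2 / ((N:ℝ) - 1)) *
      (((N:ℝ) - 1) * ((σmax - σmin) * |ξ - θ| / (σmin * ((N:ℝ) - 1)))) := by
    rw [Real.norm_eq_abs]
    unfold Gtoy
    rw [abs_mul, abs_of_nonneg (by positivity : (0:ℝ) ≤ 2 / ((N:ℝ) - 1))]
    exact mul_le_mul_of_nonneg_left hsum (by positivity)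
  refine this.trans (le_of_eq ?_)
  field_simp
end
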